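/- arXiv:2502.00620 — 4 statements merged into one kernel-verified Lean document; each statement's English description precedes it below -/
import Mathlib

section
/- Let R ∈ ℝ^{d×n}, T ∈ ℝⁿ, β > 0, and let w* = (1/n) R ((1/n)RᵀR + βIₙ)⁻¹ T be the ridge regression solution fit to targets T. Then the training error satisfies (1/n)‖Rᵀw* − T‖² ≤ ( β / (λ_min((1/n)RᵀR) + β) )² · (1/n)‖T‖², where λ_min((1/n)RᵀR) is the smallest eigenvalue of the n×n matrix (1/n)RᵀR. -/
/-!
The ridge residual is `K (K + βI)⁻¹ T - T = -β (K + βI)⁻¹ T` with `K = (1/n) RᵀR`. In an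
orthonormal eigenbasis of `K`, `K + βI` stretches the `i`-th coordinate by `μᵢ + β ≥ λ_min + β`,
so `(K + βI)⁻¹` shrinks Euclidean norms by at least that factor.
-/

open Matrix BigOperators

theorem OrthonormalBasis.dotProduct_self_eq_sum_sq {n : Type*} [Fintype n]
    (b : OrthonormalBasis n ℝ (EuclideanSpace ℝ n)) (v : n → ℝ) :
    v ⬝ᵥ v = ∑ i, (⇑(b i) ⬝ᵥ v) ^ 2 := by
  have := b.sum_inner_mul_inner (WithLp.toLp 2 v) (WithLp.toLp 2 v)
  simp only [EuclideanSpace.inner_eq_star_dotProduct, star_trivial] at this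
  simp only [sq, ← this, dotProduct_comm v]

namespace Matrix

variable {n : Type*} [Fintype n] [DecidableEq n]

theorem mul_inv_add_smul_one_sub_one {α : Type*} [CommRing α] {K : Matrix n n α} {β : α}
    (h : IsUnit (K + β • 1).det) : K * (K + β • 1)⁻¹ - 1 = -β • (K + β • 1)⁻¹ := by
  calc K * (K + β • 1)⁻¹ - 1
      = (K + β • 1) * (K + β • 1)⁻¹ - β • (K + β • 1)⁻¹ - 1 := by
        rw [add_mul, smul_mul, one_mul, add_sub_cancel_right]
    _ = -β • (K + β • 1)⁻¹ := by rw [mul_nonsing_inv _ h, neg_smul]; abel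

theorem IsHermitian.eigenvectorBasis_dotProduct_mulVec {A : Matrix n n ℝ} (hA : A.IsHermitian)
    (v : n → ℝ) (i : n) :
    ⇑(hA.eigenvectorBasis i) ⬝ᵥ (A *ᵥ v) = hA.eigenvalues i * (⇑(hA.eigenvectorBasis i) ⬝ᵥ v) := by
  have hAt : Aᵀ = A := by rw [← conjTranspose_eq_transpose_of_trivial]; exact hA
  rw [dotProduct_mulVec, ← mulVec_transpose, hAt, hA.mulVec_eigenvectorBasis, smul_dotProduct,
    smul_eq_mul]

theorem IsHermitian.sq_mul_dotProduct_self_le {A : Matrix n n ℝ} (hA : A.IsHermitian) {c β : ℝ}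
    (hc : ∀ i, c ≤ hA.eigenvalues i) (hcβ : 0 ≤ c + β) (v : n → ℝ) :
    (c + β) ^ 2 * (v ⬝ᵥ v) ≤ ((A + β • 1) *ᵥ v) ⬝ᵥ ((A + β • 1) *ᵥ v) := by
  set b := hA.eigenvectorBasis
  have hcoord (i : n) : ⇑(b i) ⬝ᵥ ((A + β • 1) *ᵥ v) = (hA.eigenvalues i + β) * (⇑(b i) ⬝ᵥ v) := by
    rw [add_mulVec, dotProduct_add, hA.eigenvectorBasis_dotProduct_mulVec, smul_mulVec, one_mulVec,
      dotProduct_smul, smul_eq_mul, add_mul]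
  rw [b.dotProduct_self_eq_sum_sq, b.dotProduct_self_eq_sum_sq ((A + β • 1) *ᵥ v), Finset.mul_sum]
  gcongr with i
  rw [hcoord, mul_pow]
  gcongr
  linarith [hc i]

theorem PosSemidef.ridge_residual_dotProduct_le {K : Matrix n n ℝ} (hK : K.PosSemidef) {β : ℝ}
    (hβ : 0 < β) (T : n → ℝ) :
    ((K * (K + β • 1)⁻¹) *ᵥ T - T) ⬝ᵥ ((K * (K + β • 1)⁻¹) *ᵥ T - T)
      ≤ (β / ((⨅ i, hK.1.eigenvalues i) + β)) ^ 2 * (T ⬝ᵥ T) := by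
  set lmin := ⨅ i, hK.1.eigenvalues i
  have hunit : IsUnit (K + β • 1).det :=
    (isUnit_iff_isUnit_det _).mp (PosDef.posSemidef_add hK (PosDef.one.smul hβ)).isUnit
  have hlβ : 0 < lmin + β := by linarith [Real.iInf_nonneg hK.eigenvalues_nonneg]
  have hbound := hK.1.sq_mul_dotProduct_self_le
    (fun i => ciInf_le (Set.finite_range _).bddBelow i) hlβ.le ((K + β • 1)⁻¹ *ᵥ T)
  rw [mulVec_mulVec, mul_nonsing_inv _ hunit, one_mulVec] at hbound
  have hres : (K * (K + β • 1)⁻¹) *ᵥ T - T = -β • ((K + β • 1)⁻¹ *ᵥ T) := by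
    rw [← smul_mulVec, ← mul_inv_add_smul_one_sub_one hunit, sub_mulVec, one_mulVec]
  rw [hres, smul_dotProduct, dotProduct_smul, smul_eq_mul, smul_eq_mul, div_pow, div_mul_eq_mul_div,
    le_div_iff₀ (by positivity)]
  nlinarith [sq_nonneg β]

end Matrix

/-- Ridge training-error bound: for `w* = (1/n) R ((1/n)RᵀR + βI)⁻¹ T`,
`(1/n)‖Rᵀw* − T‖² ≤ (β/(λ_min((1/n)RᵀR) + β))² (1/n)‖T‖²`. -/
theorem stmt5 (d n : ℕ) (R : Matrix (Fin d) (Fin n) ℝ) (T : Fin n → ℝ) (β : ℝ) (hβ : 0 < β)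
    (hK : (((1 / (n : ℝ)) • (Rᵀ * R)) : Matrix (Fin n) (Fin n) ℝ).IsHermitian) :
    (1 / (n : ℝ)) *
        ∑ i, (Rᵀ.mulVec
            ((1 / (n : ℝ)) •
              (R * ((1 / (n : ℝ)) • (Rᵀ * R) + β • (1 : Matrix (Fin n) (Fin n) ℝ))⁻¹).mulVec T)
            i - T i) ^ 2
      ≤ (β / ((⨅ i, hK.eigenvalues i) + β)) ^ 2 * ((1 / (n : ℝ)) * ∑ i, (T i) ^ 2) := by
  set K : Matrix (Fin n) (Fin n) ℝ := (1 / (n : ℝ)) • (Rᵀ * R)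
  have hKpsd : K.PosSemidef := by
    simpa only [conjTranspose_eq_transpose_of_trivial] using
      (posSemidef_conjTranspose_mul_self R).smul (by positivity : (0 : ℝ) ≤ 1 / n)
  have hfit : Rᵀ *ᵥ ((1 / (n : ℝ)) • (R * (K + β • 1)⁻¹) *ᵥ T) = (K * (K + β • 1)⁻¹) *ᵥ T := by
    rw [mulVec_smul, mulVec_mulVec, ← smul_mulVec, ← Matrix.mul_assoc, ← smul_mul]
  rw [hfit, mul_left_comm]
  gcongr
  simpa only [dotProduct, Pi.sub_apply, sq] using hKpsd.ridge_residual_dotProduct_le hβ T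
end

section
/- Let K_s, K_w ∈ ℝ^{n×n} be symmetric positive semidefinite matrices, let c_s, c_w > 0, and set P_s = K_s(K_s + c_sIₙ)⁻¹ and P_w = K_w(K_w + c_wIₙ)⁻¹. Then for every v ∈ ℝⁿ: ‖P_s(Iₙ − P_w)v‖ ≤ ‖P_s(Iₙ − P_w)P_s‖ · ‖v‖ + ‖(Iₙ − P_s)v‖, where ‖·‖ on matrices is the operator norm induced by the Euclidean norm and ‖·‖ on vectors is the Euclidean norm. -/
open Matrix BigOperators
open scoped Matrix.Norms.L2Operator

/-!
Write `B = K + c I`. Then `P = K B⁻¹` and `I - P = (c I) B⁻¹`, and for hermitian `X` one has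
`I - (X B⁻¹)ᴴ (X B⁻¹) = B⁻¹ (B² - X²) B⁻¹`. Both `B² - K² = 2cK + c²I` and
`B² - c²I = K² + 2cK` are positive semidefinite, so `‖P‖ ≤ 1` and `‖I - P‖ ≤ 1`.
The inequality follows by splitting `v = P_s v + (I - P_s) v` and applying the triangle inequality,
with `‖P_s (I - P_w)‖ ≤ 1` on the second part.
-/

/-- Euclidean norm of a vector in `ℝⁿ`. -/
noncomputable def evnorm {n : ℕ} (v : Fin n → ℝ) : ℝ := Real.sqrt (∑ i, (v i) ^ 2)

namespace Matrix

open scoped ComplexOrder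

variable {𝕜 : Type*} [RCLike 𝕜] {n : Type*} [DecidableEq n]

lemma posDef_add_smul_one {K : Matrix n n 𝕜} (hK : K.PosSemidef) {c : ℝ} (hc : 0 < c) :
    (K + c • (1 : Matrix n n 𝕜)).PosDef :=
  PosDef.posSemidef_add hK (PosDef.one.smul hc)

variable [Fintype n]

lemma l2_opNorm_le_one_of_posSemidef_one_sub {m : Type*} [Fintype m] (A : Matrix m n 𝕜)
    (h : (1 - Aᴴ * A).PosSemidef) : ‖A‖ ≤ 1 := by
  rw [l2_opNorm_def]
  refine ContinuousLinearMap.opNorm_le_bound _ zero_le_one fun x => ?_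
  have hx := (RCLike.nonneg_iff.mp (h.dotProduct_mulVec_nonneg x.ofLp)).1
  rw [sub_mulVec, one_mulVec, ← mulVec_mulVec, dotProduct_sub, dotProduct_mulVec,
    ← star_mulVec, map_sub, sub_nonneg, dotProduct_comm, dotProduct_comm (star x.ofLp)] at hx
  rw [one_mul, ← sq_le_sq₀ (norm_nonneg _) (norm_nonneg _), @norm_sq_eq_re_inner 𝕜,
    @norm_sq_eq_re_inner 𝕜]
  exact hx

lemma l2_opNorm_mul_inv_le_one {X B : Matrix n n 𝕜} (hX : X.IsHermitian) (hBh : B.IsHermitian)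
    (hB : IsUnit B.det) (h : (B * B - X * X).PosSemidef) : ‖X * B⁻¹‖ ≤ 1 := by
  refine l2_opNorm_le_one_of_posSemidef_one_sub _ ?_
  have hBinv : B⁻¹ᴴ = B⁻¹ := hBh.inv.eq
  have hconj : 1 - (X * B⁻¹)ᴴ * (X * B⁻¹) = B⁻¹ᴴ * (B * B - X * X) * B⁻¹ := by
    rw [conjTranspose_mul, hX.eq, hBinv, mul_sub, sub_mul, ← mul_assoc B⁻¹ B,
      nonsing_inv_mul _ hB, one_mul, mul_nonsing_inv _ hB]
    simp only [mul_assoc]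
  rw [hconj]
  exact h.conjTranspose_mul_mul_same _

lemma one_sub_mul_inv_add_smul_one {K : Matrix n n 𝕜} (hK : K.PosSemidef) {c : ℝ} (hc : 0 < c) :
    1 - K * (K + c • (1 : Matrix n n 𝕜))⁻¹ = c • (1 : Matrix n n 𝕜) * (K + c • 1)⁻¹ := by
  have hB := (isUnit_iff_isUnit_det _).mp (posDef_add_smul_one hK hc).isUnit
  calc 1 - K * (K + c • (1 : Matrix n n 𝕜))⁻¹
      = (K + c • 1) * (K + c • 1)⁻¹ - K * (K + c • 1)⁻¹ := by rw [mul_nonsing_inv _ hB]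
    _ = c • (1 : Matrix n n 𝕜) * (K + c • 1)⁻¹ := by rw [← sub_mul, add_sub_cancel_left]

lemma l2_opNorm_mul_inv_add_smul_one_le_one {K : Matrix n n 𝕜} (hK : K.PosSemidef) {c : ℝ}
    (hc : 0 < c) : ‖K * (K + c • (1 : Matrix n n 𝕜))⁻¹‖ ≤ 1 := by
  have hB := posDef_add_smul_one hK hc
  refine l2_opNorm_mul_inv_le_one hK.isHermitian hB.isHermitian
    ((isUnit_iff_isUnit_det _).mp hB.isUnit) ?_
  have hdiff : (K + c • 1) * (K + c • 1) - K * K = (2 * c) • K + (c ^ 2) • (1 : Matrix n n 𝕜) := by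
    simp only [add_mul, mul_add, mul_one, one_mul, smul_mul_assoc, mul_smul_comm]
    module
  rw [hdiff]
  exact (hK.smul (by positivity)).add (PosSemidef.one.smul (by positivity))

lemma l2_opNorm_one_sub_mul_inv_add_smul_one_le_one {K : Matrix n n 𝕜} (hK : K.PosSemidef)
    {c : ℝ} (hc : 0 < c) : ‖1 - K * (K + c • (1 : Matrix n n 𝕜))⁻¹‖ ≤ 1 := by
  have hB := posDef_add_smul_one hK hc
  rw [one_sub_mul_inv_add_smul_one hK hc]
  refine l2_opNorm_mul_inv_le_one (isHermitian_one.smul (.all c)) hB.isHermitian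
    ((isUnit_iff_isUnit_det _).mp hB.isUnit) ?_
  have hdiff : (K + c • 1) * (K + c • 1) - c • (1 : Matrix n n 𝕜) * c • 1
      = Kᴴ * K + (2 * c) • K := by
    rw [hK.isHermitian.eq]
    simp only [add_mul, mul_add, mul_one, one_mul, smul_mul_assoc, mul_smul_comm]
    module
  rw [hdiff]
  exact (posSemidef_conjTranspose_mul_self K).add (hK.smul (by positivity))

end Matrix

lemma evnorm_eq_norm_toLp {n : ℕ} (v : Fin n → ℝ) : evnorm v = ‖WithLp.toLp 2 v‖ := by
  simp [evnorm, EuclideanSpace.norm_eq]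

lemma evnorm_nonneg {n : ℕ} (v : Fin n → ℝ) : 0 ≤ evnorm v := Real.sqrt_nonneg _

lemma evnorm_add_le {n : ℕ} (x y : Fin n → ℝ) : evnorm (x + y) ≤ evnorm x + evnorm y := by
  rw [evnorm_eq_norm_toLp, evnorm_eq_norm_toLp, evnorm_eq_norm_toLp]
  exact norm_add_le _ _

lemma evnorm_mulVec_le {n : ℕ} (A : Matrix (Fin n) (Fin n) ℝ) (x : Fin n → ℝ) :
    evnorm (A *ᵥ x) ≤ ‖A‖ * evnorm x := by
  rw [evnorm_eq_norm_toLp, evnorm_eq_norm_toLp]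
  exact A.l2_opNorm_mulVec _

lemma evnorm_mulVec_mulVec_le {n : ℕ} {P Q : Matrix (Fin n) (Fin n) ℝ} (hPQ : ‖P * Q‖ ≤ 1)
    (v : Fin n → ℝ) :
    evnorm (P *ᵥ (Q *ᵥ v)) ≤ ‖P * Q * P‖ * evnorm v + evnorm ((1 - P) *ᵥ v) := by
  have hsplit : P *ᵥ (Q *ᵥ v) = (P * Q * P) *ᵥ v + (P * Q) *ᵥ ((1 - P) *ᵥ v) := by
    rw [mulVec_mulVec, mulVec_mulVec, ← add_mulVec]
    congr 1
    noncomm_ring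
  calc evnorm (P *ᵥ (Q *ᵥ v))
      ≤ evnorm ((P * Q * P) *ᵥ v) + evnorm ((P * Q) *ᵥ ((1 - P) *ᵥ v)) :=
        hsplit ▸ evnorm_add_le _ _
    _ ≤ ‖P * Q * P‖ * evnorm v + evnorm ((1 - P) *ᵥ v) :=
        add_le_add (evnorm_mulVec_le _ _)
          ((evnorm_mulVec_le _ _).trans (mul_le_of_le_one_left (evnorm_nonneg _) hPQ))

/-- With `P_s = K_s(K_s+c_sI)⁻¹` and `P_w = K_w(K_w+c_wI)⁻¹` built from symmetric PSD kernels,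
`‖P_s(I−P_w)v‖ ≤ ‖P_s(I−P_w)P_s‖ ‖v‖ + ‖(I−P_s)v‖`. -/
theorem stmt9 (n : ℕ) (Ks Kw : Matrix (Fin n) (Fin n) ℝ)
    (hKs : Ks.PosSemidef) (hKw : Kw.PosSemidef)
    (cs cw : ℝ) (hcs : 0 < cs) (hcw : 0 < cw) (v : Fin n → ℝ) :
    evnorm ((Ks * (Ks + cs • (1 : Matrix (Fin n) (Fin n) ℝ))⁻¹).mulVec
        (((1 : Matrix (Fin n) (Fin n) ℝ)
          - Kw * (Kw + cw • (1 : Matrix (Fin n) (Fin n) ℝ))⁻¹).mulVec v))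
      ≤ ‖(Ks * (Ks + cs • (1 : Matrix (Fin n) (Fin n) ℝ))⁻¹) *
            ((1 : Matrix (Fin n) (Fin n) ℝ)
              - Kw * (Kw + cw • (1 : Matrix (Fin n) (Fin n) ℝ))⁻¹) *
            (Ks * (Ks + cs • (1 : Matrix (Fin n) (Fin n) ℝ))⁻¹)‖ * evnorm v
        + evnorm ((((1 : Matrix (Fin n) (Fin n) ℝ)
              - Ks * (Ks + cs • (1 : Matrix (Fin n) (Fin n) ℝ))⁻¹)).mulVec v) := by
  refine evnorm_mulVec_mulVec_le ((l2_opNorm_mul _ _).trans ?_) v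
  exact mul_le_one₀ (l2_opNorm_mul_inv_add_smul_one_le_one hKs hcs) (norm_nonneg _)
    (l2_opNorm_one_sub_mul_inv_add_smul_one_le_one hKw hcw)
end

section
/- Let (Ω, 𝒫) be a probability space and let r : Ω → ℝ^d be a random vector with ‖r‖² ≤ B almost surely, for a constant B > 0. Let Σ ∈ ℝ^{d×d} be the matrix with entries Σ_{ij} = E[r_i r_j]. Then the entrywise expectation E[(rrᵀ − Σ)²] exists and the matrix B·Σ − E[(rrᵀ − Σ)²] is positive semidefinite. -/
/-!
Write `M = rrᵀ - Σ`. Expanding `M²` entrywise, each entry of `E[M²]` is a sum of covariances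
`cov(rᵢrₖ, rₖrⱼ) = E[rᵢrₖ²rⱼ] - ΣᵢₖΣₖⱼ`, so `E[M²] = E[‖r‖² rrᵀ] - Σ²`. Hence
`BΣ - E[M²] = E[(B - ‖r‖²) rrᵀ] + ΣᵀΣ`: the first matrix is PSD because its weight is
almost surely nonnegative, the second because `Σ` is symmetric. Boundedness of `r` puts every
coordinate in `L^∞`, which makes all the moments involved integrable.
-/

open Matrix MeasureTheory ProbabilityTheory

section

variable {Ω ι : Type*} [MeasurableSpace Ω] {μ : Measure Ω} {r : Ω → ι → ℝ}

theorem memLp_top_mul_apply (hr : ∀ i, MemLp (fun ω => r ω i) ⊤ μ) (i j : ι) :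
    MemLp (fun ω => r ω i * r ω j) ⊤ μ :=
  (hr j).mul' (hr i)

variable [Fintype ι]

theorem Matrix.posSemidef_of_integral_mul_vecMulVec {c : Ω → ℝ} {v : Ω → ι → ℝ}
    (hc : ∀ᵐ ω ∂μ, 0 ≤ c ω)
    (hint : ∀ i j, Integrable (fun ω => c ω * vecMulVec (v ω) (v ω) i j) μ) :
    (of fun i j => ∫ ω, c ω * vecMulVec (v ω) (v ω) i j ∂μ).PosSemidef := by
  simp only [vecMulVec_apply] at hint ⊢
  refine .of_dotProduct_mulVec_nonneg ?_ fun x => ?_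
  · ext i j
    simp [mul_comm (v _ i)]
  have hquad : star x ⬝ᵥ ((of fun i j => ∫ ω, c ω * (v ω i * v ω j) ∂μ) *ᵥ x)
      = ∫ ω, c ω * (x ⬝ᵥ v ω) ^ 2 ∂μ := by
    calc _ = ∑ i, ∑ j, ∫ ω, x i * x j * (c ω * (v ω i * v ω j)) ∂μ := by
          simp only [dotProduct, mulVec, of_apply, star_trivial, Finset.mul_sum]
          refine Finset.sum_congr rfl fun i _ => Finset.sum_congr rfl fun j _ => ?_
          rw [integral_const_mul]
          ring
      _ = ∫ ω, ∑ i, ∑ j, x i * x j * (c ω * (v ω i * v ω j)) ∂μ := by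
          rw [integral_finsetSum _ fun i _ => integrable_finsetSum _ fun j _ =>
            (hint i j).const_mul _]
          simp_rw [integral_finsetSum _ fun j _ => (hint _ j).const_mul _]
      _ = _ := by
          congr 1 with ω
          rw [sq, dotProduct, Finset.sum_mul_sum, Finset.mul_sum]
          refine Finset.sum_congr rfl fun i _ => ?_
          rw [Finset.mul_sum]
          exact Finset.sum_congr rfl fun j _ => by ring
  rw [hquad]
  exact integral_nonneg_of_ae (hc.mono fun ω h => mul_nonneg h (sq_nonneg _))

theorem Matrix.vecMulVec_sub_mul_self_apply (v : ι → ℝ) (S : Matrix ι ι ℝ) (i j : ι) :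
    ((vecMulVec v v - S) * (vecMulVec v v - S)) i j
      = ∑ k, (v i * v k - S i k) * (v k * v j - S k j) := by
  simp [mul_apply, vecMulVec_apply]

variable {B : ℝ}

theorem memLp_top_apply_of_sum_sq_le (hmeas : ∀ i, Measurable fun ω => r ω i)
    (hbound : ∀ᵐ ω ∂μ, ∑ i, r ω i ^ 2 ≤ B) (i : ι) : MemLp (fun ω => r ω i) ⊤ μ :=
  memLp_top_of_bound (hmeas i).aestronglyMeasurable √B <| hbound.mono fun ω hω =>
    Real.abs_le_sqrt <| (Finset.single_le_sum (fun k _ => sq_nonneg (r ω k))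
      (Finset.mem_univ i)).trans hω

theorem integrable_vecMulVec_sub_mul_self_apply [IsFiniteMeasure μ]
    (hr : ∀ i, MemLp (fun ω => r ω i) ⊤ μ) (S : Matrix ι ι ℝ) (i j : ι) :
    Integrable (fun ω => ((vecMulVec (r ω) (r ω) - S) * (vecMulVec (r ω) (r ω) - S)) i j) μ := by
  have hrr := memLp_top_mul_apply hr
  simp only [vecMulVec_sub_mul_self_apply]
  exact integrable_finsetSum _ fun k _ =>
    (((hrr k j).sub (memLp_const _)).mul' ((hrr i k).sub (memLp_const _))).integrable le_top

theorem integral_vecMulVec_sub_mul_self_apply [IsProbabilityMeasure μ]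
    (hr : ∀ i, MemLp (fun ω => r ω i) ⊤ μ)
    {S : Matrix ι ι ℝ} (hS : ∀ i j, S i j = ∫ ω, r ω i * r ω j ∂μ) (i j : ι) :
    ∫ ω, ((vecMulVec (r ω) (r ω) - S) * (vecMulVec (r ω) (r ω) - S)) i j ∂μ
      = ∫ ω, (∑ k, r ω k ^ 2) * (r ω i * r ω j) ∂μ - (S * S) i j := by
  have hrr := memLp_top_mul_apply hr
  have hcov : ∀ k, ∫ ω, (r ω i * r ω k - S i k) * (r ω k * r ω j - S k j) ∂μ
      = ∫ ω, r ω i * r ω k * (r ω k * r ω j) ∂μ - S i k * S k j := by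
    intro k
    simpa only [covariance, ← hS, Pi.mul_apply] using covariance_eq_sub
      ((hrr i k).mono_exponent le_top) ((hrr k j).mono_exponent le_top)
  have hfourth : ∀ k, Integrable (fun ω => r ω i * r ω k * (r ω k * r ω j)) μ := fun k =>
    ((hrr k j).mul' (hrr i k)).integrable le_top
  calc _ = ∑ k, ∫ ω, (r ω i * r ω k - S i k) * (r ω k * r ω j - S k j) ∂μ := by
        simp only [vecMulVec_sub_mul_self_apply]
        exact integral_finsetSum _ fun k _ =>
          (((hrr k j).sub (memLp_const _)).mul' ((hrr i k).sub (memLp_const _))).integrable le_top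
    _ = ∑ k, ∫ ω, r ω i * r ω k * (r ω k * r ω j) ∂μ - (S * S) i j := by
        simp only [hcov, Finset.sum_sub_distrib, mul_apply]
    _ = _ := by
        rw [← integral_finsetSum _ fun k _ => hfourth k]
        congr 2 with ω
        rw [Finset.sum_mul]
        exact Finset.sum_congr rfl fun k _ => by ring

end

theorem stmt11_general {Ω : Type*} [MeasurableSpace Ω] (μ : Measure Ω) [IsProbabilityMeasure μ]
    {d : ℕ} (r : Ω → Fin d → ℝ) (hmeas : ∀ i, Measurable fun ω => r ω i)
    (B : ℝ) (hbound : ∀ᵐ ω ∂μ, ∑ i, (r ω i) ^ 2 ≤ B)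
    (Sig : Matrix (Fin d) (Fin d) ℝ) (hSig : ∀ i j, Sig i j = ∫ ω, r ω i * r ω j ∂μ) :
    (∀ i j, Integrable (fun ω =>
        ((vecMulVec (r ω) (r ω) - Sig) * (vecMulVec (r ω) (r ω) - Sig)) i j) μ) ∧
    (B • Sig - Matrix.of fun i j => ∫ ω,
        ((vecMulVec (r ω) (r ω) - Sig) * (vecMulVec (r ω) (r ω) - Sig)) i j ∂μ).PosSemidef := by
  have hr := memLp_top_apply_of_sum_sq_le hmeas hbound
  have hrr := memLp_top_mul_apply hr
  have hsq : MemLp (fun ω => ∑ k, r ω k ^ 2) ⊤ μ :=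
    memLp_finsetSum _ fun k _ => by simpa only [sq] using hrr k k
  refine ⟨integrable_vecMulVec_sub_mul_self_apply hr Sig, ?_⟩
  have hSig_symm : Sigᴴ = Sig := by
    ext i j
    simp only [conjTranspose_apply, star_trivial, hSig, mul_comm]
  have hweight_int : ∀ i j,
      Integrable (fun ω => (B - ∑ k, r ω k ^ 2) * (r ω i * r ω j)) μ := fun i j =>
    ((hrr i j).mul' ((memLp_const B).sub hsq)).integrable le_top
  have hweight : ∀ i j, ∫ ω, (B - ∑ k, r ω k ^ 2) * (r ω i * r ω j) ∂μ
      = B * Sig i j - ∫ ω, (∑ k, r ω k ^ 2) * (r ω i * r ω j) ∂μ := by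
    intro i j
    simp only [sub_mul]
    rw [integral_sub (((hrr i j).const_mul B).integrable le_top)
      ((hrr i j).mul' hsq |>.integrable le_top), integral_const_mul, hSig]
  have hdecomp : B • Sig - of (fun i j => ∫ ω,
      ((vecMulVec (r ω) (r ω) - Sig) * (vecMulVec (r ω) (r ω) - Sig)) i j ∂μ)
      = of (fun i j => ∫ ω, (B - ∑ k, r ω k ^ 2) * (r ω i * r ω j) ∂μ) + Sigᴴ * Sig := by
    ext i j
    rw [hSig_symm, Matrix.add_apply, Matrix.sub_apply, Matrix.smul_apply, of_apply, of_apply,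
      integral_vecMulVec_sub_mul_self_apply hr hSig, hweight, smul_eq_mul]
    ring
  rw [hdecomp]
  exact (posSemidef_of_integral_mul_vecMulVec (hbound.mono fun ω h => sub_nonneg.2 h)
    hweight_int).add (posSemidef_conjTranspose_mul_self Sig)

/-- For a random vector `r` with `‖r‖² ≤ B` almost surely and covariance `Σ = E[rrᵀ]`,
the entrywise expectation `E[(rrᵀ − Σ)²]` exists and `B·Σ − E[(rrᵀ − Σ)²]` is PSD. -/
theorem stmt11 {Ω : Type*} [MeasurableSpace Ω] (μ : Measure Ω) [IsProbabilityMeasure μ]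
    {d : ℕ} (r : Ω → Fin d → ℝ) (hmeas : ∀ i, Measurable fun ω => r ω i)
    (B : ℝ) (hB : 0 < B) (hbound : ∀ᵐ ω ∂μ, ∑ i, (r ω i) ^ 2 ≤ B)
    (Sig : Matrix (Fin d) (Fin d) ℝ) (hSig : ∀ i j, Sig i j = ∫ ω, r ω i * r ω j ∂μ) :
    (∀ i j, Integrable (fun ω =>
        ((vecMulVec (r ω) (r ω) - Sig) * (vecMulVec (r ω) (r ω) - Sig)) i j) μ) ∧
    (B • Sig - Matrix.of fun i j => ∫ ω,
        ((vecMulVec (r ω) (r ω) - Sig) * (vecMulVec (r ω) (r ω) - Sig)) i j ∂μ).PosSemidef :=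
  stmt11_general μ r hmeas B hbound Sig hSig
end

section
/- Let R ∈ ℝ^{d×n}, let Π ∈ ℝ^{d×d} be an orthogonal projection matrix (symmetric with Π² = Π), and let β > 0 and γ ≥ 0. Then the matrices (1/n)RᵀR + βIₙ and (1/n)RᵀΠR + (γ+β)Iₙ are both invertible, and ‖((1/n)RᵀR + βIₙ)⁻¹ − ((1/n)RᵀΠR + (γ+β)Iₙ)⁻¹‖ ≤ ‖(1/n)Rᵀ(I_d − Π)R − γIₙ‖ / (β(γ+β)), where ‖·‖ is the operator norm induced by the Euclidean norm. -/
/-!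
Both regularized kernels are a positive semidefinite matrix plus a positive multiple of the
identity, so their inverses have operator norm at most `1 / β` and `1 / (γ + β)`. Their difference
is exactly `-((1/n) Rᵀ (I - Π) R - γ I)`, and the resolvent identity
`A⁻¹ - B⁻¹ = A⁻¹ (B - A) B⁻¹` gives the bound.
-/

open Matrix
open scoped Matrix.Norms.L2Operator

namespace Matrix

open scoped ComplexOrder

lemma IsHermitian.posSemidef_of_mul_self_eq {R ι : Type*} [CommRing R] [PartialOrder R]
    [StarRing R] [StarOrderedRing R] [Fintype ι] {P : Matrix ι ι R} (hP : P.IsHermitian)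
    (hPP : P * P = P) : P.PosSemidef := by
  simpa [hP.eq, hPP] using posSemidef_conjTranspose_mul_self P

variable {𝕜 ι : Type*} [RCLike 𝕜] [DecidableEq ι]

lemma PosSemidef.posDef_add_smul_one {M : Matrix ι ι 𝕜} (hM : M.PosSemidef) {c : ℝ}
    (hc : 0 < c) : (M + c • (1 : Matrix ι ι 𝕜)).PosDef :=
  PosDef.posSemidef_add hM (PosDef.one.smul hc)

variable [Fintype ι]

lemma toEuclideanCLM_real_smul_one_apply (c : ℝ) (x : EuclideanSpace 𝕜 ι) :
    toEuclideanCLM (𝕜 := 𝕜) (c • (1 : Matrix ι ι 𝕜)) x = c • x := by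
  rw [← algebraMap_smul 𝕜 c (1 : Matrix ι ι 𝕜), map_smul, map_one]
  simp [algebraMap_smul]

lemma mul_norm_le_norm_toEuclideanCLM_of_posSemidef_sub {A : Matrix ι ι 𝕜} {c : ℝ}
    (hA : (A - c • (1 : Matrix ι ι 𝕜)).PosSemidef) (x : EuclideanSpace 𝕜 ι) :
    c * ‖x‖ ≤ ‖toEuclideanCLM (𝕜 := 𝕜) A x‖ := by
  have hpos : 0 ≤ RCLike.re (inner 𝕜 (toEuclideanCLM (𝕜 := 𝕜) A x - c • x) x) := by
    simpa [← coe_toEuclideanCLM_eq_toEuclideanLin, toEuclideanCLM_real_smul_one_apply]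
      using (isPositive_toEuclideanLin_iff.mpr hA).re_inner_nonneg_left x
  have hquad : c * ‖x‖ ^ 2 ≤ ‖toEuclideanCLM (𝕜 := 𝕜) A x‖ * ‖x‖ := by
    simp only [inner_sub_left, map_sub, RCLike.real_smul_eq_coe_smul (K := 𝕜), inner_smul_left,
      RCLike.conj_ofReal, RCLike.re_ofReal_mul, inner_self_eq_norm_sq] at hpos
    linarith [re_inner_le_norm (𝕜 := 𝕜) (toEuclideanCLM (𝕜 := 𝕜) A x) x]
  rcases (norm_nonneg x).eq_or_lt with hx | hx
  · simp [← hx]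
  · nlinarith

lemma l2_opNorm_inv_le_of_posSemidef_sub {A : Matrix ι ι 𝕜} {c : ℝ} (hc : 0 < c)
    (hA : (A - c • (1 : Matrix ι ι 𝕜)).PosSemidef) : ‖A⁻¹‖ ≤ c⁻¹ := by
  have hAdet : IsUnit A.det := by
    simpa using (hA.posDef_add_smul_one hc).isUnit.map detMonoidHom
  have hinv : toEuclideanCLM (𝕜 := 𝕜) A * toEuclideanCLM (𝕜 := 𝕜) A⁻¹ = 1 := by
    rw [← map_mul, mul_nonsing_inv A hAdet, map_one]
  rw [← l2_opNorm_toEuclideanCLM]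
  refine ContinuousLinearMap.opNorm_le_bound _ (by positivity) fun y => ?_
  have hy :=
    mul_norm_le_norm_toEuclideanCLM_of_posSemidef_sub hA (toEuclideanCLM (𝕜 := 𝕜) A⁻¹ y)
  rw [show toEuclideanCLM (𝕜 := 𝕜) A (toEuclideanCLM (𝕜 := 𝕜) A⁻¹ y) = y from
    DFunLike.congr_fun hinv y] at hy
  rw [inv_mul_eq_div, le_div_iff₀ hc]
  simpa [mul_comm] using hy

end Matrix

/-- Resolvent comparison between the full regularized kernel and the principal regularized
kernel: `‖((1/n)RᵀR + βI)⁻¹ − ((1/n)RᵀΠR + (γ+β)I)⁻¹‖ ≤ ‖(1/n)Rᵀ(I−Π)R − γI‖ / (β(γ+β))`. -/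
theorem stmt13 (d n : ℕ) (R : Matrix (Fin d) (Fin n) ℝ)
    (P : Matrix (Fin d) (Fin d) ℝ) (hPsymm : P.IsSymm) (hPidem : P * P = P)
    (β γ : ℝ) (hβ : 0 < β) (hγ : 0 ≤ γ) :
    IsUnit ((1 / (n : ℝ)) • (Rᵀ * R) + β • (1 : Matrix (Fin n) (Fin n) ℝ)) ∧
    IsUnit ((1 / (n : ℝ)) • (Rᵀ * P * R) + (γ + β) • (1 : Matrix (Fin n) (Fin n) ℝ)) ∧
    ‖((1 / (n : ℝ)) • (Rᵀ * R) + β • (1 : Matrix (Fin n) (Fin n) ℝ))⁻¹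
        - ((1 / (n : ℝ)) • (Rᵀ * P * R) + (γ + β) • (1 : Matrix (Fin n) (Fin n) ℝ))⁻¹‖
      ≤ ‖(1 / (n : ℝ)) • (Rᵀ * ((1 : Matrix (Fin d) (Fin d) ℝ) - P) * R)
          - γ • (1 : Matrix (Fin n) (Fin n) ℝ)‖ / (β * (γ + β)) := by
  have hγβ : 0 < γ + β := by linarith
  have hP : P.PosSemidef := (isHermitian_iff_isSymm.mpr hPsymm).posSemidef_of_mul_self_eq hPidem
  have hK : ((1 / (n : ℝ)) • (Rᵀ * R)).PosSemidef := by
    simpa using (posSemidef_conjTranspose_mul_self R).smul (by positivity : (0 : ℝ) ≤ 1 / n)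
  have hKP : ((1 / (n : ℝ)) • (Rᵀ * P * R)).PosSemidef := by
    simpa using (hP.conjTranspose_mul_mul_same R).smul (by positivity : (0 : ℝ) ≤ 1 / n)
  set A := (1 / (n : ℝ)) • (Rᵀ * R) + β • (1 : Matrix (Fin n) (Fin n) ℝ)
  set B := (1 / (n : ℝ)) • (Rᵀ * P * R) + (γ + β) • (1 : Matrix (Fin n) (Fin n) ℝ)
  set E := (1 / (n : ℝ)) • (Rᵀ * ((1 : Matrix (Fin d) (Fin d) ℝ) - P) * R)
    - γ • (1 : Matrix (Fin n) (Fin n) ℝ)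
  have hA := hK.posDef_add_smul_one hβ
  have hB := hKP.posDef_add_smul_one hγβ
  refine ⟨hA.isUnit, hB.isUnit, ?_⟩
  have hBA : B - A = -E := by
    simp only [A, B, E, Matrix.mul_sub, Matrix.sub_mul, Matrix.mul_one]
    module
  calc ‖A⁻¹ - B⁻¹‖ = ‖A⁻¹ * (B - A) * B⁻¹‖ := by
        rw [inv_sub_inv (iff_of_true hA.isUnit hB.isUnit)]
    _ ≤ ‖A⁻¹‖ * ‖B - A‖ * ‖B⁻¹‖ := norm_mul₃_le
    _ ≤ β⁻¹ * ‖E‖ * (γ + β)⁻¹ := by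
        rw [hBA, norm_neg]
        gcongr
        · exact l2_opNorm_inv_le_of_posSemidef_sub hβ (by simpa [A] using hK)
        · exact l2_opNorm_inv_le_of_posSemidef_sub hγβ (by simpa [B] using hKP)
    _ = ‖E‖ / (β * (γ + β)) := by field_simp
end
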